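/- arXiv:2605.25122 — 3 statements merged into one kernel-verified Lean document; each statement's English description precedes it below -/
import Mathlib

section
/- For a convex body K in R^n, the function z ↦ vol_n(conv({z} ∪ K) \ K) is convex on ℝ^n. -/
/-!
Write `H z = conv({z} ∪ K)`, so that the function is `z ↦ vol (H z) - vol K`. For
`z = a z₁ + b z₂`, every point `θ z + η k` of `H z` equals `a p + b q` with
`p = θ z₁ + η k ∈ H z₁` and `q = θ z₂ + η k ∈ H z₂`, and `q - p` is parallel to `z₂ - z₁`.
So on every line parallel to `z₂ - z₁`, the slice of `H z` lies in `a • I + b • J`, where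
`I` and `J` are the (interval) slices of `H z₁` and `H z₂`; its length is at most
`a |I| + b |J|`, and Fubini gives `vol (H z) ≤ a vol (H z₁) + b vol (H z₂)`.
-/

open MeasureTheory Set Bornology Pointwise

theorem Real.ofReal_sSup_sub_sInf_le_volume {s : Set ℝ} (hs : Convex ℝ s) (hb : IsBounded s) :
    ENNReal.ofReal (sSup s - sInf s) ≤ volume s := by
  rcases s.eq_empty_or_nonempty with rfl | hne
  · simp
  rw [← Real.volume_Ioo]
  exact measure_mono
    (IsConnected.Ioo_csInf_csSup_subset ⟨hne, hs.isPreconnected⟩ hb.bddBelow hb.bddAbove)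

theorem Real.volume_smul_add_smul_le {A B : Set ℝ} {a b : ℝ} (ha : 0 ≤ a) (hb : 0 ≤ b)
    (hA : Convex ℝ A) (hB : Convex ℝ B) (hAb : IsBounded A) (hBb : IsBounded B) :
    volume (a • A + b • B) ≤ ENNReal.ofReal a * volume A + ENNReal.ofReal b * volume B := by
  have hsub : a • A + b • B ⊆ Icc (a * sInf A + b * sInf B) (a * sSup A + b * sSup B) := by
    rintro _ ⟨_, ⟨x, hx, rfl⟩, _, ⟨y, hy, rfl⟩, rfl⟩
    simp only [smul_eq_mul]
    constructor
    · gcongr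
      exacts [csInf_le hAb.bddBelow hx, csInf_le hBb.bddBelow hy]
    · gcongr
      exacts [le_csSup hAb.bddAbove hx, le_csSup hBb.bddAbove hy]
  have hA' := sub_nonneg.2 (Real.sInf_le_sSup A hAb.bddBelow hAb.bddAbove)
  have hB' := sub_nonneg.2 (Real.sInf_le_sSup B hBb.bddBelow hBb.bddAbove)
  calc volume (a • A + b • B)
      ≤ volume (Icc (a * sInf A + b * sInf B) (a * sSup A + b * sSup B)) := measure_mono hsub
    _ = ENNReal.ofReal a * ENNReal.ofReal (sSup A - sInf A)
          + ENNReal.ofReal b * ENNReal.ofReal (sSup B - sInf B) := by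
        rw [Real.volume_Icc, ← ENNReal.ofReal_mul ha, ← ENNReal.ofReal_mul hb,
          ← ENNReal.ofReal_add (by positivity) (by positivity)]
        ring_nf
    _ ≤ _ := by
        gcongr
        exacts [Real.ofReal_sSup_sub_sInf_le_volume hA hAb,
          Real.ofReal_sSup_sub_sInf_le_volume hB hBb]

theorem ENNReal.toReal_le_of_le_ofReal_mul_add_ofReal_mul {x y z : ENNReal} {a b : ℝ}
    (ha : 0 ≤ a) (hb : 0 ≤ b) (hy : y ≠ ⊤) (hz : z ≠ ⊤)
    (h : x ≤ ENNReal.ofReal a * y + ENNReal.ofReal b * z) :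
    x.toReal ≤ a * y.toReal + b * z.toReal := by
  apply ENNReal.toReal_le_of_le_ofReal (by positivity)
  rwa [ENNReal.ofReal_add (by positivity) (by positivity), ENNReal.ofReal_mul ha,
    ENNReal.ofReal_mul hb, ENNReal.ofReal_toReal hy, ENNReal.ofReal_toReal hz]

theorem measure_le_combo_of_subset_inter {α : Type*} [MeasurableSpace α] (μ : Measure α)
    {A B C : Set α} {a b : ℝ} (ha : 0 ≤ a) (hb : 0 ≤ b) (hab : a + b = 1) (h : C ⊆ A ∩ B) :
    μ C ≤ ENNReal.ofReal a * μ A + ENNReal.ofReal b * μ B :=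
  calc μ C = ENNReal.ofReal a * μ C + ENNReal.ofReal b * μ C := by
        rw [← add_mul, ← ENNReal.ofReal_add ha hb, hab, ENNReal.ofReal_one, one_mul]
    _ ≤ _ := by
        gcongr
        exacts [h.trans inter_subset_left, h.trans inter_subset_right]

def LinearMap.prodKerEquiv {R M : Type*} [CommRing R] [AddCommGroup M] [Module R M]
    (f : M →ₗ[R] R) {u : M} (hu : f u = 1) : M ≃ₗ[R] R × LinearMap.ker f where
  toFun p := (f p, ⟨p - f p • u, by simp [hu]⟩)
  invFun q := q.1 • u + q.2
  map_add' p q := by ext <;> simp [add_smul]; abel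
  map_smul' c p := by ext <;> simp [smul_sub, mul_smul]
  left_inv p := by simp
  right_inv q := by ext <;> simp [hu]

theorem LinearMap.prodKerEquiv_self_snd {R M : Type*} [CommRing R] [AddCommGroup M]
    [Module R M] (f : M →ₗ[R] R) {u : M} (hu : f u = 1) : (f.prodKerEquiv hu u).2 = 0 := by
  ext
  simp [LinearMap.prodKerEquiv, hu]

section Module

variable {E : Type*} [AddCommGroup E] [Module ℝ E]

def parallelCombo (V : Submodule ℝ E) (a b : ℝ) (A B : Set E) : Set E :=
  {x | ∃ p ∈ A, ∃ q ∈ B, q - p ∈ V ∧ x = a • p + b • q}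

theorem parallelCombo_mono {V W : Submodule ℝ E} (h : V ≤ W) (a b : ℝ) (A B : Set E) :
    parallelCombo V a b A B ⊆ parallelCombo W a b A B :=
  fun _ ⟨p, hp, q, hq, hpq, hx⟩ => ⟨p, hp, q, hq, h hpq, hx⟩

theorem parallelCombo_bot_subset_inter {a b : ℝ} (hab : a + b = 1) (A B : Set E) :
    parallelCombo ⊥ a b A B ⊆ A ∩ B := by
  rintro _ ⟨p, hp, q, hq, hpq, rfl⟩
  rw [Submodule.mem_bot, sub_eq_zero] at hpq
  subst hpq
  rw [Convex.combo_self hab]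
  exact ⟨hp, hq⟩

theorem image_parallelCombo_subset {F : Type*} [AddCommGroup F] [Module ℝ F] (e : E →ₗ[ℝ] F)
    (V : Submodule ℝ E) (a b : ℝ) (A B : Set E) :
    e '' parallelCombo V a b A B ⊆ parallelCombo (V.map e) a b (e '' A) (e '' B) := by
  rintro _ ⟨x, ⟨p, hp, q, hq, hpq, rfl⟩, rfl⟩
  exact ⟨e p, mem_image_of_mem _ hp, e q, mem_image_of_mem _ hq,
    by simpa using Submodule.mem_map_of_mem (f := e) hpq, by simp⟩

theorem convexHull_insert_combo_subset_parallelCombo (s : Set E) (z₁ z₂ : E) {a b : ℝ}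
    (hab : a + b = 1) :
    convexHull ℝ (insert (a • z₁ + b • z₂) s) ⊆ parallelCombo (ℝ ∙ (z₂ - z₁)) a b
      (convexHull ℝ (insert z₁ s)) (convexHull ℝ (insert z₂ s)) := by
  rcases s.eq_empty_or_nonempty with rfl | hs
  · rintro x hx
    simp only [insert_empty_eq, convexHull_singleton, mem_singleton_iff] at hx ⊢
    exact ⟨z₁, mem_singleton _, z₂, mem_singleton _, Submodule.mem_span_singleton_self _, hx⟩
  rw [convexHull_insert hs]
  rintro x hx
  obtain ⟨_, rfl, k, hk, θ, η, hθ, hη, hθη, rfl⟩ := mem_convexJoin.1 hx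
  have hmem (z : E) : θ • z + η • k ∈ convexHull ℝ (insert z s) :=
    convex_convexHull ℝ _ (subset_convexHull ℝ _ (mem_insert z s))
      (convexHull_mono (subset_insert z s) hk) hθ hη hθη
  refine ⟨_, hmem z₁, _, hmem z₂, Submodule.mem_span_singleton.2 ⟨θ, by module⟩, ?_⟩
  obtain rfl : b = 1 - a := by linarith
  module

variable [TopologicalSpace E] [ContinuousAdd E] [ContinuousSMul ℝ E]

theorem IsCompact.convexJoin {s t : Set E} (hs : IsCompact s) (ht : IsCompact t) :
    IsCompact (_root_.convexJoin ℝ s t) := by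
  have : _root_.convexJoin ℝ s t =
      (fun p : ℝ × E × E => (1 - p.1) • p.2.1 + p.1 • p.2.2) '' (Icc 0 1 ×ˢ s ×ˢ t) := by
    ext x
    simp only [mem_convexJoin, segment_eq_image, mem_image, mem_prod, Prod.exists]
    constructor
    · rintro ⟨y, hy, z, hz, θ, hθ, rfl⟩
      exact ⟨θ, y, z, ⟨hθ, hy, hz⟩, rfl⟩
    · rintro ⟨θ, y, z, ⟨hθ, hy, hz⟩, rfl⟩
      exact ⟨y, hy, z, hz, θ, hθ, rfl⟩
  rw [this]
  exact (isCompact_Icc.prod (hs.prod ht)).image (by fun_prop)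

theorem isCompact_convexHull_insert {K : Set E} (hK : IsCompact K) (hKc : Convex ℝ K) (z : E) :
    IsCompact (convexHull ℝ (insert z K)) := by
  rcases K.eq_empty_or_nonempty with rfl | hne
  · simp
  rw [convexHull_insert hne, hKc.convexHull_eq]
  exact isCompact_singleton.convexJoin hK

end Module

theorem Convex.preimage_prodMk_right {F : Type*} [AddCommGroup F] [Module ℝ F]
    {A : Set (ℝ × F)} (hA : Convex ℝ A) (y : F) : Convex ℝ ((·, y) ⁻¹' A) := by
  intro x₁ hx₁ x₂ hx₂ s t hs ht hst
  simpa [Prod.smul_mk, Convex.combo_self hst] using hA hx₁ hx₂ hs ht hst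

theorem volume_prod_le_of_subset_parallelCombo {F : Type*} [AddCommGroup F] [Module ℝ F]
    [MeasurableSpace F] (ν : Measure F) [SFinite ν] {A B C : Set (ℝ × F)} {a b : ℝ}
    (ha : 0 ≤ a) (hb : 0 ≤ b) (hab : a + b = 1)
    (hAm : MeasurableSet A) (hBm : MeasurableSet B) (hCm : MeasurableSet C)
    (hA : Convex ℝ A) (hB : Convex ℝ B)
    (hAb : IsBounded (Prod.fst '' A)) (hBb : IsBounded (Prod.fst '' B))
    (hC : C ⊆ parallelCombo (LinearMap.ker (LinearMap.snd ℝ ℝ F)) a b A B) :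
    (volume.prod ν) C ≤
      ENNReal.ofReal a * (volume.prod ν) A + ENNReal.ofReal b * (volume.prod ν) B := by
  have hfiber (y : F) : (·, y) ⁻¹' C ⊆ a • ((·, y) ⁻¹' A) + b • ((·, y) ⁻¹' B) := by
    intro x hx
    obtain ⟨p, hp, q, hq, hpq, hx⟩ := hC hx
    have hq2 : q.2 = p.2 := by simpa [sub_eq_zero] using hpq
    have hp2 : p.2 = y := by
      have := congrArg Prod.snd hx
      simp only [Prod.snd_add, Prod.smul_snd, hq2, Convex.combo_self hab] at this
      exact this.symm
    have hx1 : x = a • p.1 + b • q.1 := congrArg Prod.fst hx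
    refine hx1 ▸ add_mem_add (smul_mem_smul_set ?_) (smul_mem_smul_set ?_)
    · simpa [← hp2] using hp
    · simpa [← hp2, ← hq2] using hq
  have hbdd {S : Set (ℝ × F)} (hS : IsBounded (Prod.fst '' S)) (y : F) :
      IsBounded ((·, y) ⁻¹' S) :=
    hS.subset fun x hx => ⟨(x, y), hx, rfl⟩
  rw [Measure.prod_apply_symm hCm, Measure.prod_apply_symm hAm, Measure.prod_apply_symm hBm,
    ← lintegral_const_mul _ (measurable_measure_prodMk_right hAm),
    ← lintegral_const_mul _ (measurable_measure_prodMk_right hBm),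
    ← lintegral_add_left ((measurable_measure_prodMk_right hAm).const_mul _)]
  exact lintegral_mono fun y => (measure_mono (hfiber y)).trans
    (Real.volume_smul_add_smul_le ha hb (hA.preimage_prodMk_right y)
      (hB.preimage_prodMk_right y) (hbdd hAb y) (hbdd hBb y))

section AddHaar

variable {E : Type*} [NormedAddCommGroup E] [NormedSpace ℝ E] [FiniteDimensional ℝ E]
  [MeasurableSpace E] [BorelSpace E] (μ : Measure E) [μ.IsAddHaarMeasure]

theorem addHaar_le_of_subset_parallelCombo {A B C : Set E} {a b : ℝ} (ha : 0 ≤ a) (hb : 0 ≤ b)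
    (hab : a + b = 1) (hA : IsCompact A) (hB : IsCompact B) (hAc : Convex ℝ A)
    (hBc : Convex ℝ B) (hCm : MeasurableSet C) (u : E)
    (hC : C ⊆ parallelCombo (ℝ ∙ u) a b A B) :
    μ C ≤ ENNReal.ofReal a * μ A + ENNReal.ofReal b * μ B := by
  rcases eq_or_ne u 0 with rfl | hu
  · rw [Submodule.span_zero_singleton] at hC
    exact measure_le_combo_of_subset_inter μ ha hb hab
      (hC.trans (parallelCombo_bot_subset_inter hab A B))
  -- `e` sends `u` to `(1, 0)`, and by uniqueness of Haar measure `μ` is carried to a multiple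
  -- of a product measure.
  obtain ⟨f, hf⟩ := SeparatingDual.exists_eq_one (R := ℝ) hu
  let e := (f : E →ₗ[ℝ] ℝ).prodKerEquiv hf
  let em := e.toContinuousLinearEquiv.toHomeomorph.toMeasurableEquiv
  let ρ : Measure (ℝ × LinearMap.ker (f : E →ₗ[ℝ] ℝ)) := volume.prod Measure.addHaar
  have : (μ.map em).IsAddHaarMeasure := e.toContinuousLinearEquiv.isAddHaarMeasure_map μ
  obtain ⟨c, hmap⟩ : ∃ c : NNReal, μ.map em = c • ρ :=
    ⟨_, Measure.isAddLeftInvariant_eq_smul _ _⟩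
  have hμ (S : Set E) : μ S = c * ρ (em '' S) := by
    calc μ S = μ.map em (em '' S) := by rw [em.map_apply, em.preimage_image]
      _ = c * ρ (em '' S) := by rw [hmap, Measure.smul_apply, ENNReal.smul_def, smul_eq_mul]
  have hcompact {S : Set E} (hS : IsCompact S) : IsCompact (em '' S) :=
    hS.image e.toContinuousLinearEquiv.continuous
  have hline : (ℝ ∙ u).map e.toLinearMap ≤ LinearMap.ker (LinearMap.snd ℝ ℝ _) := by
    rw [Submodule.map_le_iff_le_comap, Submodule.span_singleton_le_iff_mem]
    exact LinearMap.prodKerEquiv_self_snd _ hf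
  have hC' : em '' C ⊆
      parallelCombo (LinearMap.ker (LinearMap.snd ℝ ℝ _)) a b (em '' A) (em '' B) :=
    (image_mono hC).trans ((image_parallelCombo_subset e.toLinearMap _ a b A B).trans
      (parallelCombo_mono hline a b _ _))
  calc μ C = c * ρ (em '' C) := hμ C
    _ ≤ c * (ENNReal.ofReal a * ρ (em '' A) + ENNReal.ofReal b * ρ (em '' B)) := by
        gcongr
        exact volume_prod_le_of_subset_parallelCombo _ ha hb hab
          (hcompact hA).measurableSet (hcompact hB).measurableSet
          (em.measurableSet_image.2 hCm) (hAc.linear_image e.toLinearMap)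
          (hBc.linear_image e.toLinearMap)
          ((hcompact hA).image continuous_fst).isBounded
          ((hcompact hB).image continuous_fst).isBounded hC'
    _ = ENNReal.ofReal a * μ A + ENNReal.ofReal b * μ B := by
        rw [hμ A, hμ B]
        ring

theorem convexOn_addHaar_convexHull_insert {K : Set E} (hK : IsCompact K) (hKc : Convex ℝ K) :
    ConvexOn ℝ univ fun z => (μ (convexHull ℝ (insert z K))).toReal := by
  refine ⟨convex_univ, fun z₁ _ z₂ _ a b ha hb hab => ?_⟩
  have hH := isCompact_convexHull_insert hK hKc
  exact ENNReal.toReal_le_of_le_ofReal_mul_add_ofReal_mul ha hb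
    (hH z₁).measure_lt_top.ne (hH z₂).measure_lt_top.ne
    (addHaar_le_of_subset_parallelCombo μ ha hb hab (hH z₁) (hH z₂) (convex_convexHull ℝ _)
      (convex_convexHull ℝ _) (hH _).measurableSet (z₂ - z₁)
      (convexHull_insert_combo_subset_parallelCombo K z₁ z₂ hab))

end AddHaar

theorem illumination_functional_convex_general (n : ℕ)
    (K : Set (EuclideanSpace ℝ (Fin n)))
    (hKc : IsCompact K) (hKconv : Convex ℝ K) :
    ConvexOn ℝ Set.univ
      (fun z : EuclideanSpace ℝ (Fin n) =>
        (volume (convexHull ℝ ({z} ∪ K) \ K)).toReal) := by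
  have hK_subset (z) : K ⊆ convexHull ℝ (insert z K) :=
    (subset_insert z K).trans (subset_convexHull ℝ _)
  have hdiff (z : EuclideanSpace ℝ (Fin n)) : (volume (convexHull ℝ ({z} ∪ K) \ K)).toReal =
      (volume (convexHull ℝ (insert z K))).toReal - (volume K).toReal := by
    rw [singleton_union, measure_sdiff (hK_subset z) hKc.measurableSet.nullMeasurableSet
      hKc.measure_lt_top.ne, ENNReal.toReal_sub_of_le (measure_mono (hK_subset z))
      (isCompact_convexHull_insert hKc hKconv z).measure_lt_top.ne]
  simp_rw [hdiff]
  exact (convexOn_addHaar_convexHull_insert volume hKc hKconv).sub (concaveOn_const _ convex_univ)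

/-- For a convex body `K` in `ℝⁿ`, the function
`z ↦ vol_n(conv({z} ∪ K) \ K)` is convex on `ℝⁿ`. -/
theorem illumination_functional_convex (n : ℕ)
    (K : Set (EuclideanSpace ℝ (Fin n)))
    (hKc : IsCompact K) (hKconv : Convex ℝ K) (hKint : (interior K).Nonempty) :
    ConvexOn ℝ Set.univ
      (fun z : EuclideanSpace ℝ (Fin n) =>
        (volume (convexHull ℝ ({z} ∪ K) \ K)).toReal) :=
  illumination_functional_convex_general n K hKc hKconv
end

section
/- In the upper half-plane model of the hyperbolic plane, if η is the hyperbolic geodesic segment joining (u₀, v₀) to (u₁, v₁) (with v₀, v₁ > 0), then tan((1/2) ∫_η dx/y) = (u₁ - u₀)/(v₀ + v₁). -/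
/-!
On a circle `(x - c)² + y² = r²` write `x = c + r sin φ`, `y = r cos φ`; then `dx / y = dφ`, so the
integral is the increment of `φ`, and `tan (φ / 2) = (x - c) / (y + r)` is a rational function of
the endpoint. The subtraction formula for `tan` turns the half increment into
`(u₁ - u₀) / (v₀ + v₁)`. Along a vertical line `dx = 0` and both sides vanish.
-/

open MeasureTheory Set intervalIntegral Real

lemma HasDerivAt.fst {γ : ℝ → ℝ × ℝ} {γ' : ℝ × ℝ} {t : ℝ} (h : HasDerivAt γ γ' t) :
    HasDerivAt (fun s => (γ s).1) γ'.1 t :=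
  (ContinuousLinearMap.fst ℝ ℝ ℝ).hasFDerivAt.comp_hasDerivAt t h

lemma HasDerivAt.snd {γ : ℝ → ℝ × ℝ} {γ' : ℝ × ℝ} {t : ℝ} (h : HasDerivAt γ γ' t) :
    HasDerivAt (fun s => (γ s).2) γ'.2 t :=
  (ContinuousLinearMap.snd ℝ ℝ ℝ).hasFDerivAt.comp_hasDerivAt t h

lemma HasDerivAt.eq_zero_of_eqOn_Icc {f : ℝ → ℝ} {f' a b k t : ℝ} (hf : HasDerivAt f f' t)
    (hconst : ∀ s ∈ Icc a b, f s = k) (ht : t ∈ Ioo a b) : f' = 0 :=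
  hf.unique <| (hasDerivAt_const t k).congr_of_eventuallyEq <|
    Filter.mem_of_superset (Icc_mem_nhds ht.1 ht.2) hconst

lemma tan_arctan_sub_arctan (a b : ℝ) : tan (arctan a - arctan b) = (a - b) / (1 + a * b) := by
  rw [tan_sub' ⟨arctan_ne_mul_pi_div_two, arctan_ne_mul_pi_div_two⟩, tan_arctan, tan_arctan]

/-- At `p = (c + r sin φ, r cos φ)` this is `φ / 2`. -/
noncomputable def circleHalfAngle (c r : ℝ) (p : ℝ × ℝ) : ℝ :=
  arctan ((p.1 - c) / (p.2 + r))

lemma hasDerivAt_circleHalfAngle {γ : ℝ → ℝ × ℝ} {γ' : ℝ × ℝ} {c r t : ℝ}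
    (hγ : HasDerivAt γ γ' t) (hy : 0 < (γ t).2) (hr : 0 ≤ r)
    (hcirc : ((γ t).1 - c) ^ 2 + (γ t).2 ^ 2 = r ^ 2)
    (htangent : ((γ t).1 - c) * γ'.1 + (γ t).2 * γ'.2 = 0) :
    HasDerivAt (fun s => 2 * circleHalfAngle c r (γ s)) (γ'.1 / (γ t).2) t := by
  have hyr : (γ t).2 + r ≠ 0 := by positivity
  have hq := (hγ.fst.sub_const c).div (hγ.snd.add_const r) hyr
  refine (hq.arctan.const_mul 2).congr_deriv ?_
  simp only [Pi.div_apply]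
  field_simp
  linear_combination γ'.1 * hcirc - 2 * ((γ t).1 - c) * htangent

lemma tan_circleHalfAngle_sub {c r : ℝ} {p q : ℝ × ℝ} (hr : 0 ≤ r) (hp : 0 < p.2) (hq : 0 < q.2)
    (hpc : (p.1 - c) ^ 2 + p.2 ^ 2 = r ^ 2) (hqc : (q.1 - c) ^ 2 + q.2 ^ 2 = r ^ 2) :
    tan (circleHalfAngle c r q - circleHalfAngle c r p) = (q.1 - p.1) / (p.2 + q.2) := by
  have hden : 0 < (q.2 + r) * (p.2 + r) + (q.1 - c) * (p.1 - c) := by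
    nlinarith [sq_nonneg ((p.1 - c) + (q.1 - c))]
  rw [circleHalfAngle, circleHalfAngle, tan_arctan_sub_arctan,
    div_eq_div_iff (by field_simp; positivity) (by positivity)]
  field_simp
  linear_combination (q.1 - c) * hpc - (p.1 - c) * hqc

section IntegralDxOverY

variable {γ γ' : ℝ → ℝ × ℝ} {a b : ℝ}

lemma integral_dx_div_y_of_fst_eq_const {u : ℝ} (hab : a ≤ b)
    (hγ : ∀ t ∈ Icc a b, HasDerivAt γ (γ' t) t)
    (hint : IntervalIntegrable (fun t => (γ' t).1 / (γ t).2) volume a b)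
    (hvert : ∀ t ∈ Icc a b, (γ t).1 = u) :
    ∫ t in a..b, (γ' t).1 / (γ t).2 = 0 := by
  rw [← sub_self (0 : ℝ)]
  refine integral_eq_sub_of_hasDerivAt_of_le hab continuousOn_const (fun t ht => ?_) hint
  rw [(hγ t (Ioo_subset_Icc_self ht)).fst.eq_zero_of_eqOn_Icc hvert ht, zero_div]
  exact hasDerivAt_const t 0

lemma integral_dx_div_y_of_mem_circle {c r : ℝ} (hab : a ≤ b)
    (hγ : ∀ t ∈ Icc a b, HasDerivAt γ (γ' t) t)
    (hint : IntervalIntegrable (fun t => (γ' t).1 / (γ t).2) volume a b)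
    (hy : ∀ t ∈ Icc a b, 0 < (γ t).2) (hr : 0 ≤ r)
    (hcirc : ∀ t ∈ Icc a b, ((γ t).1 - c) ^ 2 + (γ t).2 ^ 2 = r ^ 2) :
    ∫ t in a..b, (γ' t).1 / (γ t).2 =
      2 * circleHalfAngle c r (γ b) - 2 * circleHalfAngle c r (γ a) := by
  have hγc : ContinuousOn γ (Icc a b) := fun t ht => (hγ t ht).continuousAt.continuousWithinAt
  refine integral_eq_sub_of_hasDerivAt_of_le (f := fun t => 2 * circleHalfAngle c r (γ t))
    hab ?_ (fun t ht => ?_) hint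
  · refine continuousOn_const.mul (continuous_arctan.comp_continuousOn
      ((hγc.fst.sub continuousOn_const).div (hγc.snd.add continuousOn_const) fun t ht => ?_))
    have := hy t ht
    positivity
  · have ht' := Ioo_subset_Icc_self ht
    refine hasDerivAt_circleHalfAngle (hγ t ht') (hy t ht') hr (hcirc t ht') ?_
    have h := ((((hγ t ht').fst.sub_const c).pow 2).add ((hγ t ht').snd.pow 2)).eq_zero_of_eqOn_Icc
      hcirc ht
    linear_combination h / 2

end IntegralDxOverY

theorem tan_half_integral_dx_over_y_general
    (u₀ v₀ u₁ v₁ : ℝ) (hv₀ : 0 < v₀) (hv₁ : 0 < v₁)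
    (η : ℝ → ℝ × ℝ) (η' : ℝ → ℝ × ℝ)
    (hderiv : ∀ t ∈ Set.Icc (0:ℝ) 1, HasDerivAt η (η' t) t)
    (hderiv_cont : ContinuousOn η' (Set.Icc (0:ℝ) 1))
    (hpos : ∀ t ∈ Set.Icc (0:ℝ) 1, 0 < (η t).2)
    (h0 : η 0 = (u₀, v₀)) (h1 : η 1 = (u₁, v₁))
    (hgeo : (∀ t ∈ Set.Icc (0:ℝ) 1, (η t).1 = u₀) ∨
      ∃ c R : ℝ, ∀ t ∈ Set.Icc (0:ℝ) 1, ((η t).1 - c) ^ 2 + (η t).2 ^ 2 = R ^ 2) :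
    Real.tan ((1 / 2) * ∫ t in (0:ℝ)..1, (η' t).1 / (η t).2) =
      (u₁ - u₀) / (v₀ + v₁) := by
  have hη : ContinuousOn η (Icc 0 1) := fun t ht => (hderiv t ht).continuousAt.continuousWithinAt
  have hint : IntervalIntegrable (fun t => (η' t).1 / (η t).2) volume 0 1 :=
    ((continuous_fst.comp_continuousOn hderiv_cont).div (continuous_snd.comp_continuousOn hη)
      fun t ht => (hpos t ht).ne').intervalIntegrable_of_Icc zero_le_one
  rcases hgeo with hvert | ⟨c, R, hcirc⟩
  · have hu : u₁ = u₀ := by simpa [h1] using hvert 1 (right_mem_Icc.2 zero_le_one)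
    simp [integral_dx_div_y_of_fst_eq_const zero_le_one hderiv hint hvert, hu]
  · have hcirc' : ∀ t ∈ Icc (0:ℝ) 1, ((η t).1 - c) ^ 2 + (η t).2 ^ 2 = |R| ^ 2 := by
      simpa only [sq_abs] using hcirc
    have hp := hcirc' 0 (left_mem_Icc.2 zero_le_one)
    have hq := hcirc' 1 (right_mem_Icc.2 zero_le_one)
    rw [h0] at hp
    rw [h1] at hq
    rw [integral_dx_div_y_of_mem_circle zero_le_one hderiv hint hpos (abs_nonneg R) hcirc', h0, h1,
      ← mul_sub, ← mul_assoc, one_div_mul_cancel two_ne_zero, one_mul]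
    exact tan_circleHalfAngle_sub (abs_nonneg R) hv₀ hv₁ hp hq

/-- if `η` is a hyperbolic geodesic segment in the upper half-plane
joining `(u₀, v₀)` to `(u₁, v₁)` (so its image lies on a vertical line or on a
circle centered on the x-axis), then
`tan((1/2) ∫_η dx/y) = (u₁ - u₀)/(v₀ + v₁)`. -/
theorem tan_half_integral_dx_over_y
    (u₀ v₀ u₁ v₁ : ℝ) (hv₀ : 0 < v₀) (hv₁ : 0 < v₁)
    (η : ℝ → ℝ × ℝ) (η' : ℝ → ℝ × ℝ)
    (hderiv : ∀ t ∈ Set.Icc (0:ℝ) 1, HasDerivAt η (η' t) t)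
    (hderiv_cont : ContinuousOn η' (Set.Icc (0:ℝ) 1))
    (hpos : ∀ t ∈ Set.Icc (0:ℝ) 1, 0 < (η t).2)
    (hinj : Set.InjOn η (Set.Icc (0:ℝ) 1))
    (h0 : η 0 = (u₀, v₀)) (h1 : η 1 = (u₁, v₁))
    (hgeo : (∀ t ∈ Set.Icc (0:ℝ) 1, (η t).1 = u₀) ∨
      ∃ c R : ℝ, ∀ t ∈ Set.Icc (0:ℝ) 1, ((η t).1 - c) ^ 2 + (η t).2 ^ 2 = R ^ 2) :
    Real.tan ((1 / 2) * ∫ t in (0:ℝ)..1, (η' t).1 / (η t).2) =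
      (u₁ - u₀) / (v₀ + v₁) :=
  tan_half_integral_dx_over_y_general u₀ v₀ u₁ v₁ hv₀ hv₁ η η' hderiv hderiv_cont hpos h0 h1 hgeo
end

section
/- Let S = [-1,1]² ⊂ ℝ², let φ_s(x,y) = (1 + x² + y²)^{-3/2}, and for r > 1 set z = (r,0), z' = (r,1). Then the weighted volume of conv({z'} ∪ S) \ S with respect to φ_s is strictly smaller than that of conv({z} ∪ S) \ S; explicitly, ∫_1^r ∫_{-(r-s)/(r-1)}^{(r-s)/(r-1)} (1 + s² + (a + (s-1)/(r-1))²)^{-3/2} da ds < ∫_1^r ∫_{-(r-s)/(r-1)}^{(r-s)/(r-1)} (1 + s² + a²)^{-3/2} da ds. -/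
open MeasureTheory Set intervalIntegral

/-!
Write `w s = (r - s) / (r - 1)`. For `|b| ≤ 1` the part of `conv({(r, b)} ∪ [-1,1]²)` outside the
square is the triangle `1 < s ≤ r, |y - b (s - 1) / (r - 1)| ≤ w s`, so by Fubini its weight is
`∫₁ʳ ∫_{-w s}^{w s} φ(s, a + b (s - 1) / (r - 1)) da ds`. Passing from `b = 0` to `b = 1` shifts
every vertical slice by `c = (s - 1) / (r - 1) > 0`, which trades `[-w, -w + c]` for the farther
piece `[w, w + c]`; as `φ(s, ·)` is strictly decreasing in `|t|`, every inner integral drops.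
-/

theorem setIntegral_region_between_cc {E : Type*} [NormedAddCommGroup E] [NormedSpace ℝ E]
    {f : ℝ × ℝ → E} (hf : Continuous f) {g h : ℝ → ℝ} (hg : Continuous g) (hh : Continuous h)
    {a b : ℝ} (hab : a ≤ b) (hgh : ∀ x ∈ Ioc a b, g x ≤ h x) :
    ∫ p in {p : ℝ × ℝ | p.1 ∈ Ioc a b ∧ p.2 ∈ Icc (g p.1) (h p.1)}, f p =
      ∫ x in a..b, ∫ y in g x..h x, f (x, y) := by
  set R := {p : ℝ × ℝ | p.1 ∈ Ioc a b ∧ p.2 ∈ Icc (g p.1) (h p.1)}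
  have hR : MeasurableSet R :=
    measurableSet_region_between_cc hg.measurable hh.measurable measurableSet_Ioc
  obtain ⟨m, hm⟩ := ((isCompact_Icc (a := a) (b := b)).image hg).bddBelow
  obtain ⟨M, hM⟩ := ((isCompact_Icc (a := a) (b := b)).image hh).bddAbove
  have hR_sub : R ⊆ Icc a b ×ˢ Icc m M := fun p ⟨hp, hg', hh'⟩ =>
    ⟨Ioc_subset_Icc_self hp, (hm ⟨p.1, Ioc_subset_Icc_self hp, rfl⟩).trans hg',
      hh'.trans (hM ⟨p.1, Ioc_subset_Icc_self hp, rfl⟩)⟩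
  have hint : Integrable (R.indicator f) (volume.prod volume) :=
    (integrable_indicator_iff hR).2 <|
      (hf.continuousOn.integrableOn_compact (isCompact_Icc.prod isCompact_Icc)).mono_set hR_sub
  have hslice : ∀ x, ∫ y, R.indicator f (x, y) =
      (Ioc a b).indicator (fun x => ∫ y in Icc (g x) (h x), f (x, y)) x := by
    intro x
    by_cases hx : x ∈ Ioc a b
    · rw [indicator_of_mem hx, ← MeasureTheory.integral_indicator measurableSet_Icc]
      congr 1 with y
      simp only [R, indicator, mem_ofPred_eq, hx, true_and]
    · simp only [R, indicator, mem_ofPred_eq, hx, false_and, ite_false, integral_zero]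
  rw [← MeasureTheory.integral_indicator hR, Measure.volume_eq_prod, integral_prod _ hint]
  simp_rw [hslice]
  rw [MeasureTheory.integral_indicator measurableSet_Ioc, integral_of_le hab]
  refine setIntegral_congr_fun measurableSet_Ioc fun x hx => ?_
  rw [integral_Icc_eq_integral_Ioc, integral_of_le (hgh x hx)]

theorem continuous_parametric_intervalIntegral_of_continuous_limits {X E : Type*}
    [TopologicalSpace X] [NormedAddCommGroup E] [NormedSpace ℝ E] {f : X → ℝ → E}
    (hf : Continuous (Function.uncurry f)) {u v : X → ℝ} (hu : Continuous u) (hv : Continuous v) :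
    Continuous fun x => ∫ t in u x..v x, f x t := by
  have hfx : ∀ x, Continuous (f x) := fun x => hf.comp (Continuous.prodMk_right x)
  simp_rw [← integral_interval_sub_left ((hfx _).intervalIntegrable 0 (v _))
    ((hfx _).intervalIntegrable 0 (u _))]
  exact (continuous_parametric_intervalIntegral_of_continuous hf hv).sub
    (continuous_parametric_intervalIntegral_of_continuous hf hu)

theorem integral_comp_add_lt_of_abs_lt {f : ℝ → ℝ} (hf : Continuous f)
    (hf_lt : ∀ u v, |u| < |v| → f v < f u) {L c : ℝ} (hL : 0 < L) (hc : 0 < c) :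
    ∫ t in -L..L, f (t + c) < ∫ t in -L..L, f t := by
  have hI : ∀ a b, IntervalIntegrable f volume a b := hf.intervalIntegrable
  rw [integral_comp_add_right, ← sub_pos,
    integral_interval_sub_interval_comm (hI _ _) (hI _ _) (hI _ _), sub_pos]
  have h_shift : ∀ d, ∫ x in d..d + c, f x = ∫ x in 0..c, f (d + x) := fun d => by
    rw [integral_comp_add_left, add_zero]
  have h_lt : ∀ x, 0 < x → f (L + x) < f (-L + x) := fun x hx => hf_lt _ _ <| by
    rw [abs_of_pos (by linarith : 0 < L + x)]; exact abs_lt.2 ⟨by linarith, by linarith⟩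
  rw [h_shift, h_shift]
  exact integral_lt_integral_of_continuousOn_of_le_of_exists_lt hc (by fun_prop) (by fun_prop)
    (fun x hx => (h_lt x hx.1).le) ⟨c, right_mem_Icc.2 hc.le, h_lt c hc⟩

theorem integral_integral_comp_add_lt {F : ℝ → ℝ → ℝ}
    (hF : Continuous (Function.uncurry F)) (hF_lt : ∀ s u v, |u| < |v| → F s v < F s u)
    {L c : ℝ → ℝ} (hL : Continuous L) (hc : Continuous c) {a b : ℝ} (hab : a < b)
    (hL_pos : ∀ s ∈ Ioo a b, 0 < L s) (hc_pos : ∀ s ∈ Ioo a b, 0 < c s) :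
    ∫ s in a..b, ∫ t in -L s..L s, F s (t + c s) < ∫ s in a..b, ∫ t in -L s..L s, F s t := by
  have h_shifted : Continuous fun s => ∫ t in -L s..L s, F s (t + c s) :=
    continuous_parametric_intervalIntegral_of_continuous_limits (by fun_prop) hL.neg hL
  have h_centered : Continuous fun s => ∫ t in -L s..L s, F s t :=
    continuous_parametric_intervalIntegral_of_continuous_limits hF hL.neg hL
  rw [← sub_pos, ← integral_sub (h_centered.intervalIntegrable _ _)
    (h_shifted.intervalIntegrable _ _)]
  refine intervalIntegral_pos_of_pos_on ((h_centered.sub h_shifted).intervalIntegrable _ _)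
    (fun s hs => sub_pos.2 ?_) hab
  exact integral_comp_add_lt_of_abs_lt (by fun_prop) (hF_lt s) (hL_pos s hs) (hc_pos s hs)

theorem rpow_one_add_sq_add_sq_lt {p : ℝ} (hp : p < 0) (s : ℝ) {u v : ℝ} (h : |u| < |v|) :
    (1 + s ^ 2 + v ^ 2) ^ p < (1 + s ^ 2 + u ^ 2) ^ p :=
  Real.rpow_lt_rpow_of_neg (by positivity) (by nlinarith [sq_lt_sq.2 h]) hp

theorem convexHull_singleton_union_Icc_diff_Icc {r b : ℝ} (hr : 1 < r) (hb : |b| ≤ 1) :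
    convexHull ℝ ({((r, b) : ℝ × ℝ)} ∪ Icc (-1, -1) (1, 1)) \ Icc (-1, -1) (1, 1) =
      {p : ℝ × ℝ | p.1 ∈ Ioc 1 r ∧
        p.2 ∈ Icc (b * (p.1 - 1) / (r - 1) - (r - p.1) / (r - 1))
          (b * (p.1 - 1) / (r - 1) + (r - p.1) / (r - 1))} := by
  have hr₁ : 0 < r - 1 := sub_pos.2 hr
  obtain ⟨hb₁, hb₂⟩ := abs_le.1 hb
  rw [convexHull_union (singleton_nonempty _) (nonempty_Icc.2 (by norm_num)),
    convexHull_singleton, (convex_Icc _ _).convexHull_eq, convexJoin_singleton_left]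
  ext ⟨s, a⟩
  obtain ⟨t, rfl⟩ : ∃ t, s = r - t * (r - 1) := ⟨(r - s) / (r - 1), by field_simp; ring⟩
  have hw : (r - (r - t * (r - 1))) / (r - 1) = t := by field_simp; ring
  have hc : b * (r - t * (r - 1) - 1) / (r - 1) = b * (1 - t) := by field_simp; ring
  simp only [mem_sdiff, mem_iUnion₂, segment_eq_image, exists_prop,
    mem_image, mem_ofPred_eq, mem_Ioc, mem_Icc, Prod.mk_le_mk, Prod.ext_iff, Prod.smul_mk,
    Prod.mk_add_mk, smul_eq_mul, hw, hc, Prod.exists]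
  constructor
  · rintro ⟨⟨x, y, ⟨⟨hx₁, hy₁⟩, hx₂, hy₂⟩, θ, ⟨hθ₀, hθ₁⟩, hs, ha⟩, hnot⟩
    have hθt : θ ≤ t := by nlinarith
    have ht₁ : t < 1 := by
      by_contra! ht
      exact hnot ⟨⟨by nlinarith, by nlinarith⟩, by nlinarith, by nlinarith⟩
    refine ⟨⟨by nlinarith, by nlinarith⟩, ?_, ?_⟩
    · nlinarith [mul_nonneg (by linarith : 0 ≤ 1 - b) (sub_nonneg.2 hθt),
        mul_nonneg hθ₀ (by linarith : 0 ≤ 1 + y)]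
    · nlinarith [mul_nonneg (by linarith : 0 ≤ 1 + b) (sub_nonneg.2 hθt),
        mul_nonneg hθ₀ (by linarith : 0 ≤ 1 - y)]
  · rintro ⟨⟨hs₁, hs₂⟩, ha₁, ha₂⟩
    have ht₀ : 0 ≤ t := by nlinarith
    have ht₁ : t < 1 := by nlinarith
    refine ⟨?_, fun h => by nlinarith [h.2.1]⟩
    -- the point lies on the segment from `(r, b)` to `(1, y)` at parameter `t`
    rcases ht₀.eq_or_lt with rfl | ht₀
    · exact ⟨1, b, ⟨⟨by norm_num, hb₁⟩, le_rfl, hb₂⟩, 0, ⟨le_rfl, zero_le_one⟩, by ring,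
        by linarith⟩
    · refine ⟨1, (a - (1 - t) * b) / t, ⟨⟨by norm_num, ?_⟩, le_rfl, ?_⟩, t, ⟨ht₀.le, ht₁.le⟩,
        by ring, by field_simp; ring⟩
      · rw [le_div_iff₀ ht₀]; linarith
      · rw [div_le_one ht₀]; linarith

theorem setIntegral_convexHull_singleton_union_Icc_diff_Icc {E : Type*} [NormedAddCommGroup E]
    [NormedSpace ℝ E] {f : ℝ × ℝ → E} (hf : Continuous f) {r b : ℝ} (hr : 1 < r)
    (hb : |b| ≤ 1) :
    ∫ p in convexHull ℝ ({((r, b) : ℝ × ℝ)} ∪ Icc (-1, -1) (1, 1)) \ Icc (-1, -1) (1, 1), f p =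
      ∫ s in (1:ℝ)..r, ∫ a in -((r - s) / (r - 1))..(r - s) / (r - 1),
        f (s, a + b * (s - 1) / (r - 1)) := by
  rw [convexHull_singleton_union_Icc_diff_Icc hr hb,
    setIntegral_region_between_cc hf (g := fun s => b * (s - 1) / (r - 1) - (r - s) / (r - 1))
      (h := fun s => b * (s - 1) / (r - 1) + (r - s) / (r - 1)) (by fun_prop) (by fun_prop) hr.le
      fun s hs => ?_]
  · refine integral_congr fun s _ => ?_
    rw [integral_comp_add_right (fun y => f (s, y)), neg_add_eq_sub, add_comm]
  · have : 0 ≤ (r - s) / (r - 1) := div_nonneg (by linarith [hs.2]) (by linarith)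
    linarith

/-- for the square `S = [-1,1]²`, the spherical weight
`φ_s(x,y) = (1+x²+y²)^{-3/2}`, and `r > 1`, the weighted volume of
`conv({(r,1)} ∪ S) \ S` is strictly smaller than that of `conv({(r,0)} ∪ S) \ S`;
explicitly, the corresponding double integrals satisfy a strict inequality. -/
theorem spherical_square_illumination_not_convex (r : ℝ) (hr : 1 < r) :
    (∫ p in convexHull ℝ ({((r, 1) : ℝ × ℝ)} ∪ Set.Icc (-1, -1) (1, 1)) \
        Set.Icc (-1, -1) (1, 1),
        (1 + p.1 ^ 2 + p.2 ^ 2) ^ (-(3:ℝ)/2)) <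
      (∫ p in convexHull ℝ ({((r, 0) : ℝ × ℝ)} ∪ Set.Icc (-1, -1) (1, 1)) \
        Set.Icc (-1, -1) (1, 1),
        (1 + p.1 ^ 2 + p.2 ^ 2) ^ (-(3:ℝ)/2)) ∧
    (∫ s in (1:ℝ)..r, ∫ a in (-(r - s) / (r - 1))..((r - s) / (r - 1)),
        (1 + s ^ 2 + (a + (s - 1) / (r - 1)) ^ 2) ^ (-(3:ℝ)/2)) <
      (∫ s in (1:ℝ)..r, ∫ a in (-(r - s) / (r - 1))..((r - s) / (r - 1)),
        (1 + s ^ 2 + a ^ 2) ^ (-(3:ℝ)/2)) := by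
  have hr₁ : 0 < r - 1 := sub_pos.2 hr
  have hφ : Continuous fun p : ℝ × ℝ => (1 + p.1 ^ 2 + p.2 ^ 2) ^ (-(3:ℝ)/2) :=
    .rpow_const (by fun_prop) fun _ => .inl (by positivity)
  have h_lt : (∫ s in (1:ℝ)..r, ∫ a in -((r - s) / (r - 1))..(r - s) / (r - 1),
        (1 + s ^ 2 + (a + (s - 1) / (r - 1)) ^ 2) ^ (-(3:ℝ)/2)) <
      ∫ s in (1:ℝ)..r, ∫ a in -((r - s) / (r - 1))..(r - s) / (r - 1),
        (1 + s ^ 2 + a ^ 2) ^ (-(3:ℝ)/2) :=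
    integral_integral_comp_add_lt (F := fun s t => (1 + s ^ 2 + t ^ 2) ^ (-(3:ℝ)/2)) hφ
      (fun s _ _ => rpow_one_add_sq_add_sq_lt (by norm_num) s) (by fun_prop) (by fun_prop) hr
      (fun s hs => div_pos (by linarith [hs.2]) hr₁) (fun s hs => div_pos (by linarith [hs.1]) hr₁)
  simp only [neg_div (r - 1)]
  refine ⟨?_, h_lt⟩
  rw [setIntegral_convexHull_singleton_union_Icc_diff_Icc hφ hr (by norm_num),
    setIntegral_convexHull_singleton_union_Icc_diff_Icc hφ hr (by norm_num)]
  simpa only [one_mul, zero_mul, zero_div, add_zero] using h_lt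
end
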